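/- For any graph G and any vertex v of G, box(G) ≤ box(G − v) + 1, where G − v is the graph obtained by deleting v. -/

import Mathlib

/-!
Take `k` interval graphs whose intersection is `G − v`. After normalising each representation so
that every interval is nonempty, give `v` an interval containing all the others: `v` then becomes
adjacent to every vertex in each of the `k` coordinates, while the adjacencies among the other
vertices are unchanged. One more interval graph, in which `v` is adjacent exactly to its
`G`-neighbours and all other pairs are adjacent, removes the non-edges at `v`. Such graphs, one per
vertex, also show that a finite graph has finite boxicity, so the infimum defining it is attained.
-/

open SimpleGraph

/-- A graph is an interval graph if it is the intersection graph of closed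
intervals of the real line. -/
def IsIntervalGraph {V : Type*} (G : SimpleGraph V) : Prop :=
  ∃ I : V → Set ℝ, (∀ v, ∃ a b : ℝ, I v = Set.Icc a b) ∧
    ∀ u v : V, u ≠ v → (G.Adj u v ↔ (I u ∩ I v).Nonempty)

/-- `G` is the intersection of `k` interval graphs on the same vertex set. -/
def HasBoxicityLE {V : Type*} (G : SimpleGraph V) (k : ℕ) : Prop :=
  ∃ f : Fin k → SimpleGraph V, (∀ i, IsIntervalGraph (f i)) ∧
    ∀ u v : V, G.Adj u v ↔ ∀ i, (f i).Adj u v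

/-- The boxicity of `G`: the least `k` such that `G` is the intersection of
`k` interval graphs on its vertex set. -/
noncomputable def boxicity {V : Type*} (G : SimpleGraph V) : ℕ :=
  sInf {k | HasBoxicityLE G k}

open Set

lemma exists_pos_forall_subset_Icc {ι : Type*} [Finite ι] {s : ι → Set ℝ}
    (hs : ∀ i, Bornology.IsBounded (s i)) : ∃ r > 0, ∀ i, s i ⊆ Icc (-r) r := by
  obtain ⟨r, hr, hsub⟩ := (Bornology.isBounded_iUnion.2 hs).subset_closedBall_lt 0 0
  refine ⟨r, hr, fun i => (subset_iUnion s i).trans ?_⟩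
  simpa [Real.closedBall_eq_Icc] using hsub

lemma exists_pos_forall_subset_Icc_of_eq_Icc {ι : Type*} [Finite ι] {I : ι → Set ℝ}
    (hI : ∀ i, ∃ a b, I i = Icc a b) : ∃ r > 0, ∀ i, I i ⊆ Icc (-r) r :=
  exists_pos_forall_subset_Icc fun u => by
    obtain ⟨a, b, h⟩ := hI u
    exact h ▸ Metric.isBounded_Icc a b

namespace SimpleGraph

variable {V : Type*} {S : Set V}

def extendUniversal (H : SimpleGraph S) : SimpleGraph V where
  Adj u w := u ≠ w ∧ ∀ (hu : u ∈ S) (hw : w ∈ S), H.Adj ⟨u, hu⟩ ⟨w, hw⟩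
  symm := ⟨fun _ _ h => ⟨h.1.symm, fun hw hu => (h.2 hu hw).symm⟩⟩
  loopless := ⟨fun _ h => h.1 rfl⟩

variable (H : SimpleGraph S)

lemma extendUniversal_adj {u w : V} :
    H.extendUniversal.Adj u w ↔ u ≠ w ∧ ∀ (hu : u ∈ S) (hw : w ∈ S), H.Adj ⟨u, hu⟩ ⟨w, hw⟩ :=
  Iff.rfl

lemma extendUniversal_adj_coe (u w : S) : H.extendUniversal.Adj u w ↔ H.Adj u w := by
  rw [extendUniversal_adj]
  exact ⟨fun h => h.2 u.2 w.2, fun h => ⟨fun e => h.ne (Subtype.ext e), fun _ _ => h⟩⟩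

lemma extendUniversal_adj_of_notMem {u w : V} (hu : u ∉ S) (huw : u ≠ w) :
    H.extendUniversal.Adj u w :=
  (extendUniversal_adj H).2 ⟨huw, fun h => absurd h hu⟩

end SimpleGraph

namespace IsIntervalGraph

variable {V : Type*} {H : SimpleGraph V}

theorem exists_nonempty [Finite V] (hH : IsIntervalGraph H) :
    ∃ I : V → Set ℝ, (∀ u, ∃ a b, I u = Icc a b) ∧ (∀ u, (I u).Nonempty) ∧
      ∀ u w, u ≠ w → (H.Adj u w ↔ (I u ∩ I w).Nonempty) := by
  classical
  obtain ⟨I, hIcc, hI⟩ := hH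
  obtain ⟨r, -, hr⟩ := exists_pos_forall_subset_Icc_of_eq_Icc hIcc
  obtain ⟨n, hn⟩ := Countable.exists_injective_nat V
  -- an empty interval is replaced by a point of its own to the right of all the intervals
  let p : V → ℝ := fun u => r + 1 + n u
  let J : V → Set ℝ := fun u => if (I u).Nonempty then I u else Icc (p u) (p u)
  have hJ : ∀ u, ∀ x ∈ J u, x ∈ I u ∨ x = p u := fun u x hx => by
    by_cases hu : (I u).Nonempty <;> simp_all [J]
  refine ⟨J, fun u => ?_, fun u => ?_, fun u w huw => ?_⟩
  · simp only [J]; split_ifs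
    exacts [hIcc u, ⟨_, _, rfl⟩]
  · simp only [J]; split_ifs with hu
    exacts [hu, nonempty_Icc.2 le_rfl]
  · have hp : ∀ u w, ∀ x ∈ I u, x < p w := fun u w x hx => by
      have := (hr u hx).2
      have : (0 : ℝ) ≤ n w := Nat.cast_nonneg _
      linarith
    rw [hI u w huw]
    constructor
    · rintro ⟨x, hxu, hxw⟩
      have hu : (I u).Nonempty := ⟨x, hxu⟩
      have hw : (I w).Nonempty := ⟨x, hxw⟩
      exact ⟨x, by simpa [J, hu], by simpa [J, hw]⟩
    · rintro ⟨x, hxu, hxw⟩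
      rcases hJ u x hxu with hxu | hxu <;> rcases hJ w x hxw with hxw | hxw
      · exact ⟨x, hxu, hxw⟩
      · exact absurd hxw (hp u w x hxu).ne
      · exact absurd hxu (hp w u x hxw).ne
      · exact absurd (hn (by simpa [p] using hxu.symm.trans hxw)) huw

theorem extendUniversal [Finite V] {S : Set V} {H : SimpleGraph S} (hH : IsIntervalGraph H) :
    IsIntervalGraph H.extendUniversal := by
  classical
  obtain ⟨I, hIcc, hne, hI⟩ := hH.exists_nonempty
  obtain ⟨r, hr, hrI⟩ := exists_pos_forall_subset_Icc_of_eq_Icc hIcc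
  let K : V → Set ℝ := fun u => if hu : u ∈ S then I ⟨u, hu⟩ else Icc (-r) r
  have hK : ∀ u, (K u).Nonempty ∧ K u ⊆ Icc (-r) r := fun u => by
    by_cases hu : u ∈ S
    · simpa [K, hu] using ⟨hne _, hrI _⟩
    · simp only [K, hu, dite_false, subset_refl, and_true, nonempty_Icc]
      linarith
  have hKout : ∀ u w, u ∉ S → (K w ∩ K u).Nonempty := fun u w hu => by
    simpa [K, hu, inter_eq_left.2 (hK w).2] using (hK w).1
  refine ⟨K, fun u => ?_, fun u w huw => ?_⟩
  · by_cases hu : u ∈ S <;> simp [K, hu, hIcc]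
  by_cases hu : u ∈ S
  · by_cases hw : w ∈ S
    · have huw' : (⟨u, hu⟩ : S) ≠ ⟨w, hw⟩ := fun h => huw (congrArg Subtype.val h)
      simpa [K, hu, hw] using
        (extendUniversal_adj_coe H ⟨u, hu⟩ ⟨w, hw⟩).trans (hI _ _ huw')
    · exact iff_of_true (extendUniversal_adj_of_notMem H hw huw.symm).symm (hKout w u hw)
  · exact iff_of_true (extendUniversal_adj_of_notMem H hu huw) (inter_comm (K u) _ ▸ hKout u w hu)

end IsIntervalGraph

namespace SimpleGraph

variable {V : Type*}

def separatingGraph (G : SimpleGraph V) (v : V) : SimpleGraph V where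
  Adj u w := u ≠ w ∧ (u = v ∨ w = v → G.Adj u w)
  symm := ⟨fun _ _ h => ⟨h.1.symm, fun h' => (h.2 h'.symm).symm⟩⟩
  loopless := ⟨fun _ h => h.1 rfl⟩

variable (G : SimpleGraph V)

lemma separatingGraph_adj {v u w : V} :
    (G.separatingGraph v).Adj u w ↔ u ≠ w ∧ (u = v ∨ w = v → G.Adj u w) :=
  Iff.rfl

lemma adj_iff_forall_separatingGraph_adj {u w : V} :
    G.Adj u w ↔ ∀ v, (G.separatingGraph v).Adj u w :=
  ⟨fun h _ => ⟨h.ne, fun _ => h⟩, fun h => (h u).2 (Or.inl rfl)⟩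

end SimpleGraph

theorem isIntervalGraph_separatingGraph {V : Type*} (G : SimpleGraph V) (v : V) :
    IsIntervalGraph (G.separatingGraph v) := by
  classical
  refine ⟨fun u => if u = v then Icc 0 0 else if G.Adj v u then Icc 0 1 else Icc 1 1,
    fun u => by dsimp only; split_ifs <;> exact ⟨_, _, rfl⟩, fun u w huw => ?_⟩
  rw [separatingGraph_adj]
  by_cases hu : u = v <;> by_cases hw : w = v <;> by_cases hvu : G.Adj v u <;>
    by_cases hvw : G.Adj v w <;> simp_all [adj_comm]

lemma hasBoxicityLE_of_equiv {V ι : Type*} {G : SimpleGraph V} {k : ℕ} (e : ι ≃ Fin k)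
    (f : ι → SimpleGraph V) (hf : ∀ i, IsIntervalGraph (f i))
    (hG : ∀ u w, G.Adj u w ↔ ∀ i, (f i).Adj u w) : HasBoxicityLE G k :=
  ⟨f ∘ e.symm, fun _ => hf _, fun u w => (hG u w).trans e.symm.forall_congr_right.symm⟩

theorem hasBoxicityLE_natCard {V : Type*} [Finite V] (G : SimpleGraph V) :
    HasBoxicityLE G (Nat.card V) :=
  hasBoxicityLE_of_equiv (Finite.equivFin V) G.separatingGraph
    (isIntervalGraph_separatingGraph G) fun _ _ => G.adj_iff_forall_separatingGraph_adj

theorem hasBoxicityLE_boxicity {V : Type*} [Finite V] (G : SimpleGraph V) :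
    HasBoxicityLE G (boxicity G) :=
  Nat.sInf_mem (s := {k | HasBoxicityLE G k}) ⟨_, hasBoxicityLE_natCard G⟩

theorem HasBoxicityLE.succ_of_induce {V : Type*} [Finite V] {G : SimpleGraph V} {v : V} {k : ℕ}
    (h : HasBoxicityLE (G.induce {w | w ≠ v}) k) : HasBoxicityLE G (k + 1) := by
  obtain ⟨f, hf, hfG⟩ := h
  refine hasBoxicityLE_of_equiv (finSuccEquiv k).symm
    (fun i => i.elim (G.separatingGraph v) fun i => (f i).extendUniversal)
    (Option.rec (isIntervalGraph_separatingGraph G v) fun i => (hf i).extendUniversal)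
    fun u w => ?_
  simp only [Option.forall, Option.elim]
  refine ⟨fun h => ⟨G.adj_iff_forall_separatingGraph_adj.1 h v, fun i =>
    (extendUniversal_adj _).2 ⟨h.ne, fun hu hw => (hfG ⟨u, hu⟩ ⟨w, hw⟩).1 h i⟩⟩, ?_⟩
  rintro ⟨hsep, hext⟩
  by_cases huv : u = v ∨ w = v
  · exact hsep.2 huv
  rw [not_or] at huv
  exact (hfG ⟨u, huv.1⟩ ⟨w, huv.2⟩).2 fun i => ((extendUniversal_adj _).1 (hext i)).2 _ _

/-- Removing a vertex decreases the boxicity by at most one: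
`box(G) ≤ box(G − v) + 1`. -/
theorem boxicity_delete_vertex {V : Type*} [Fintype V] (G : SimpleGraph V)
    (v : V) :
    boxicity G ≤ boxicity (G.induce {w | w ≠ v}) + 1 :=
  Nat.sInf_le (hasBoxicityLE_boxicity _).succ_of_induce
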